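/- arXiv:1104.1471 — 3 statements merged into one kernel-verified Lean document; each statement's English description precedes it below -/
import Mathlib

section
/- For bipolar vectors u, v, w in {-1,+1}^n with d₁ = d_H(u,v) ≥ 1 and d₂ = d_H(u,w) ≥ 1, the angle θ between v - u and w - u satisfies θ ≤ min(π/2, arccos√(d₁/n) + arccos√(d₂/n)). -/
/-!
The nonzero coordinates of `v - u` and `w - u` are `±2`, and they agree exactly where both `v`
and `w` differ from `u`. Hence `cos θ = k / √(d₁ d₂)` with `k = #{t | u t ≠ v t ∧ u t ≠ w t}`,
which is nonnegative, giving `θ ≤ π/2`; and inclusion–exclusion gives `k ≥ d₁ + d₂ - n`. With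
`a = √(d₁/n)`, `b = √(d₂/n)` this reads `a² + b² - 1 ≤ ab cos θ`, which forces
`cos θ ≥ ab - √(1-a²)√(1-b²) = cos (arccos a + arccos b)`.
-/

open Real Finset

lemma cos_arccos_add_arccos {a b : ℝ} (ha₀ : -1 ≤ a) (ha₁ : a ≤ 1) (hb₀ : -1 ≤ b) (hb₁ : b ≤ 1) :
    cos (arccos a + arccos b) = a * b - √(1 - a ^ 2) * √(1 - b ^ 2) := by
  rw [cos_add, cos_arccos ha₀ ha₁, cos_arccos hb₀ hb₁, sin_arccos, sin_arccos]

lemma arccos_le_arccos_add_arccos {a b c : ℝ} (ha₀ : 0 ≤ a) (ha₁ : a ≤ 1) (hb₀ : 0 ≤ b)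
    (hb₁ : b ≤ 1) (hc : 0 ≤ c) (h : a ^ 2 + b ^ 2 - 1 ≤ a * b * c) :
    arccos c ≤ arccos a + arccos b := by
  have hsum : arccos a + arccos b ≤ π := by
    linarith [arccos_le_pi_div_two.2 ha₀, arccos_le_pi_div_two.2 hb₀]
  have hcos : cos (arccos a + arccos b) ≤ c := by
    rw [cos_arccos_add_arccos (by linarith) ha₁ (by linarith) hb₁]
    set p := √(1 - a ^ 2) * √(1 - b ^ 2)
    have hp : p ^ 2 = (1 - a ^ 2) * (1 - b ^ 2) := by
      rw [mul_pow, sq_sqrt (by nlinarith), sq_sqrt (by nlinarith)]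
    have hp₀ : 0 ≤ p := by positivity
    rcases le_or_gt (a * b) p with hle | hlt
    · linarith
    · -- `(ab - p) ab ≤ (ab)² - p² = a² + b² - 1 ≤ abc`
      have hab : 0 < a * b := hp₀.trans_lt hlt
      refine le_of_mul_le_mul_left ?_ hab
      nlinarith
  calc arccos c ≤ arccos (cos (arccos a + arccos b)) := arccos_le_arccos hcos
    _ = arccos a + arccos b := arccos_cos (add_nonneg (arccos_nonneg _) (arccos_nonneg _)) hsum

lemma arccos_div_sqrt_mul_sqrt_le_arccos_add_arccos {d₁ d₂ k n : ℝ} (hd₁ : 0 < d₁)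
    (hd₂ : 0 < d₂) (hd₁n : d₁ ≤ n) (hd₂n : d₂ ≤ n) (hk : 0 ≤ k) (hkn : d₁ + d₂ ≤ k + n) :
    arccos (k / (√d₁ * √d₂)) ≤ arccos √(d₁ / n) + arccos √(d₂ / n) := by
  have hn : 0 < n := hd₁.trans_le hd₁n
  refine arccos_le_arccos_add_arccos (sqrt_nonneg _) (sqrt_le_one.2 ((div_le_one hn).2 hd₁n))
    (sqrt_nonneg _) (sqrt_le_one.2 ((div_le_one hn).2 hd₂n)) (by positivity) ?_
  have hkey : √(d₁ / n) * √(d₂ / n) * (k / (√d₁ * √d₂)) = k / n := by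
    rw [sqrt_div hd₁.le, sqrt_div hd₂.le]
    field_simp
    rw [sq_sqrt hn.le, mul_comm]
  rw [hkey, sq_sqrt (by positivity), sq_sqrt (by positivity), ← add_div, div_sub_one hn.ne',
    div_le_div_iff_of_pos_right hn]
  linarith

lemma card_add_card_le_card_inter_add_card {α : Type*} [Fintype α] [DecidableEq α]
    (s t : Finset α) :
    #s + #t ≤ #(s ∩ t) + Fintype.card α := by
  rw [← card_union_add_card_inter, add_comm]
  exact Nat.add_le_add_left (card_le_univ _) _

section PmOne

variable {x y z : ℝ}

lemma sq_sub_eq_ite_of_pm_one (hx : x = -1 ∨ x = 1) (hy : y = -1 ∨ y = 1) :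
    (y - x) ^ 2 = if x ≠ y then 4 else 0 := by
  rcases hx with rfl | rfl <;> rcases hy with rfl | rfl <;> norm_num

lemma sub_mul_sub_eq_ite_of_pm_one (hx : x = -1 ∨ x = 1) (hy : y = -1 ∨ y = 1)
    (hz : z = -1 ∨ z = 1) :
    (y - x) * (z - x) = if x ≠ y ∧ x ≠ z then 4 else 0 := by
  rcases hx with rfl | rfl <;> rcases hy with rfl | rfl <;> rcases hz with rfl | rfl <;> norm_num

variable {ι : Type*} [Fintype ι] {u v w : ι → ℝ}

open scoped Classical in
lemma sum_sq_sub_eq_four_mul_card (hu : ∀ t, u t = -1 ∨ u t = 1) (hv : ∀ t, v t = -1 ∨ v t = 1) :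
    ∑ t, (v t - u t) ^ 2 = 4 * #{t | u t ≠ v t} := by
  simp_rw [sq_sub_eq_ite_of_pm_one (hu _) (hv _), ← sum_filter, sum_const, nsmul_eq_mul,
    mul_comm]

open scoped Classical in
lemma sum_sub_mul_sub_eq_four_mul_card (hu : ∀ t, u t = -1 ∨ u t = 1)
    (hv : ∀ t, v t = -1 ∨ v t = 1) (hw : ∀ t, w t = -1 ∨ w t = 1) :
    ∑ t, (v t - u t) * (w t - u t) = 4 * #{t | u t ≠ v t ∧ u t ≠ w t} := by
  simp_rw [sub_mul_sub_eq_ite_of_pm_one (hu _) (hv _) (hw _), ← sum_filter, sum_const,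
    nsmul_eq_mul, mul_comm]

end PmOne

open scoped Classical in
theorem bipolar_angle_upper_bound (n : ℕ) (u v w : Fin n → ℝ)
    (hu : ∀ t, u t = -1 ∨ u t = 1)
    (hv : ∀ t, v t = -1 ∨ v t = 1)
    (hw : ∀ t, w t = -1 ∨ w t = 1)
    (d₁ d₂ : ℕ)
    (hd₁ : d₁ = (Finset.univ.filter fun t => u t ≠ v t).card)
    (hd₂ : d₂ = (Finset.univ.filter fun t => u t ≠ w t).card)
    (hd₁pos : 1 ≤ d₁) (hd₂pos : 1 ≤ d₂) :
    Real.arccos ((∑ t, (v t - u t) * (w t - u t)) /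
      (Real.sqrt (∑ t, (v t - u t)^2) * Real.sqrt (∑ t, (w t - u t)^2)))
      ≤ min (Real.pi / 2)
        (Real.arccos (Real.sqrt (d₁ / n)) + Real.arccos (Real.sqrt (d₂ / n))) := by
  set k := #{t | u t ≠ v t ∧ u t ≠ w t} with hk_def
  have hcos : (∑ t, (v t - u t) * (w t - u t)) /
      (√(∑ t, (v t - u t) ^ 2) * √(∑ t, (w t - u t) ^ 2)) = k / (√d₁ * √d₂) := by
    rw [sum_sub_mul_sub_eq_four_mul_card hu hv hw, sum_sq_sub_eq_four_mul_card hu hv,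
      sum_sq_sub_eq_four_mul_card hu hw, ← hk_def, ← hd₁, ← hd₂,
      sqrt_mul' _ (Nat.cast_nonneg _), sqrt_mul' _ (Nat.cast_nonneg _),
      show (4 : ℝ) = 2 ^ 2 by norm_num, sqrt_sq zero_le_two]
    field_simp
  have hk : d₁ + d₂ ≤ k + n := by
    simpa [k, filter_and, hd₁, hd₂] using card_add_card_le_card_inter_add_card
      ({t | u t ≠ v t} : Finset (Fin n)) {t | u t ≠ w t}
  have hd₁n : d₁ ≤ n := by simpa [hd₁] using card_le_univ ({t | u t ≠ v t} : Finset (Fin n))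
  have hd₂n : d₂ ≤ n := by simpa [hd₂] using card_le_univ ({t | u t ≠ w t} : Finset (Fin n))
  rw [hcos]
  refine le_min (arccos_le_pi_div_two.2 (by positivity)) ?_
  exact arccos_div_sqrt_mul_sqrt_le_arccos_add_arccos (by exact_mod_cast hd₁pos)
    (by exact_mod_cast hd₂pos) (by exact_mod_cast hd₁n) (by exact_mod_cast hd₂n) k.cast_nonneg
    (by exact_mod_cast hk)
end

section
/- Let f(x) = (1/(√(2π)σ)) e^{−x²/(2σ²)} and define P(θ) = Q(√d/σ) + ∫_{√d}^{∞} f(ξ₁) ∫_{−∞}^{(√d − ξ₁ cos θ)/sin θ} f(ξ₂) dξ₂ dξ₁ for θ ∈ (0, π/2]. Then P is non-decreasing in θ, and P(π/2) = 2Q(√d/σ) − Q(√d/σ)². -/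
/-!
With `gaussPdf σ` the density of `N(0, σ²)`, the inner integral of `tripletProb` is the
`N(0, σ²)` distribution function at `(√d - ξ cos θ) / sin θ`, integrated against a nonnegative
density over `ξ ≥ √d`. For `0 ≤ √d ≤ ξ` this boundary is nondecreasing in `θ ∈ (0, π)`, by
subadditivity of `sin` on `[0, π]`, which gives monotonicity. At `θ = π / 2` the boundary is `√d`,
so the double integral factorizes into `P(ξ₁ ≥ √d) P(ξ₂ ≤ √d)`, and scaling `N(0, 1)` by `σ`
turns both factors into values of `Q`.
-/

open MeasureTheory

noncomputable def Qfun (x : ℝ) : ℝ :=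
  ∫ z in Set.Ici x, (1 / Real.sqrt (2 * Real.pi)) * Real.exp (-z ^ 2 / 2)

noncomputable def gaussPdf (σ x : ℝ) : ℝ :=
  (1 / (Real.sqrt (2 * Real.pi) * σ)) * Real.exp (-x ^ 2 / (2 * σ ^ 2))

noncomputable def tripletProb (d σ θ : ℝ) : ℝ :=
  Qfun (Real.sqrt d / σ) +
    ∫ ξ₁ in Set.Ici (Real.sqrt d),
      gaussPdf σ ξ₁ *
        ∫ ξ₂ in Set.Iic ((Real.sqrt d - ξ₁ * Real.cos θ) / Real.sin θ),
          gaussPdf σ ξ₂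

open Set Real ProbabilityTheory
open scoped NNReal

local notation "nnsq " σ:max => NNReal.mk (σ ^ 2) (sq_nonneg σ)

lemma nnsq_ne_zero {σ : ℝ} (hσ : σ ≠ 0) : nnsq σ ≠ 0 := by
  rw [← NNReal.coe_ne_zero]
  exact pow_ne_zero 2 hσ

lemma gaussPdf_eq_gaussianPDFReal {σ : ℝ} (hσ : 0 ≤ σ) :
    gaussPdf σ = gaussianPDFReal 0 (nnsq σ) := by
  ext x
  rw [gaussPdf, gaussianPDFReal, NNReal.coe_mk, sqrt_mul' _ (sq_nonneg σ), sqrt_sq hσ, sub_zero,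
    one_div]

lemma setIntegral_gaussianPDFReal (μ : ℝ) {v : ℝ≥0} (hv : v ≠ 0) (s : Set ℝ) :
    ∫ x in s, gaussianPDFReal μ v x = (gaussianReal μ v).real s := by
  rw [measureReal_def, gaussianReal_apply_eq_integral μ hv,
    ENNReal.toReal_ofReal (setIntegral_nonneg_of_ae (ae_of_all _ (gaussianPDFReal_nonneg μ v)))]

lemma Qfun_eq_gaussianReal (x : ℝ) : Qfun x = (gaussianReal 0 1).real (Ici x) := by
  rw [← setIntegral_gaussianPDFReal 0 one_ne_zero, Qfun]
  simp [gaussianPDFReal]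

lemma gaussianReal_real_Ici {σ : ℝ} (hσ : 0 < σ) (a : ℝ) :
    (gaussianReal 0 (nnsq σ)).real (Ici a) = Qfun (a / σ) := by
  have hmap := gaussianReal_map_const_mul (μ := 0) (v := 1) σ
  rw [mul_zero, mul_one] at hmap
  rw [← hmap, map_measureReal_apply (by fun_prop) measurableSet_Ici, Qfun_eq_gaussianReal]
  congr 1
  ext x
  simp [div_le_iff₀ hσ, mul_comm]

lemma gaussianReal_real_Iic {σ : ℝ} (hσ : 0 < σ) (a : ℝ) :
    (gaussianReal 0 (nnsq σ)).real (Iic a) = 1 - Qfun (a / σ) := by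
  have := nullSingletonClass_gaussianReal (μ := 0) (nnsq_ne_zero hσ.ne')
  rw [← gaussianReal_real_Ici hσ, ← probReal_compl_eq_one_sub measurableSet_Ici, compl_Ici,
    measureReal_congr Iio_ae_eq_Iic]

lemma MeasureTheory.Integrable.mul_cdf_comp {α : Type*} [MeasurableSpace α] {μ : Measure α}
    {p g : α → ℝ} (hp : Integrable p μ) (hg : Measurable g) (ν : Measure ℝ) :
    Integrable (fun x => p x * cdf ν (g x)) μ :=
  hp.mul_bdd ((monotone_cdf ν).measurable.comp hg).aestronglyMeasurable <|
    ae_of_all _ fun x => by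
      rw [norm_of_nonneg (cdf_nonneg ν _)]
      exact cdf_le_one ν _

lemma setIntegral_mul_cdf_mono {α : Type*} [MeasurableSpace α] {μ : Measure α} {p g h : α → ℝ}
    {s : Set α} (hs : MeasurableSet s) (hp : Integrable p μ) (hg : Measurable g)
    (hh : Measurable h) (hp₀ : ∀ x ∈ s, 0 ≤ p x) (hgh : ∀ x ∈ s, g x ≤ h x) (ν : Measure ℝ) :
    ∫ x in s, p x * cdf ν (g x) ∂μ ≤ ∫ x in s, p x * cdf ν (h x) ∂μ :=
  setIntegral_mono_on (hp.mul_cdf_comp hg ν).integrableOn (hp.mul_cdf_comp hh ν).integrableOn hs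
    fun x hx => mul_le_mul_of_nonneg_left (monotone_cdf ν (hgh x hx)) (hp₀ x hx)

lemma sin_add_le_sin_add_sin {x y : ℝ} (hx : 0 ≤ sin x) (hy : 0 ≤ sin y) :
    sin (x + y) ≤ sin x + sin y := by
  rw [sin_add]
  nlinarith [cos_le_one x, cos_le_one y]

lemma sub_mul_cos_div_sin_le {s x θ θ' : ℝ} (hs : 0 ≤ s) (hsx : s ≤ x) (hθ : 0 < θ)
    (hθθ' : θ ≤ θ') (hθ' : θ' < π) :
    (s - x * cos θ) / sin θ ≤ (s - x * cos θ') / sin θ' := by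
  have hsin : 0 < sin θ := sin_pos_of_pos_of_lt_pi hθ (hθθ'.trans_lt hθ')
  have hsin' : 0 < sin θ' := sin_pos_of_pos_of_lt_pi (hθ.trans_le hθθ') hθ'
  have hδ : 0 ≤ sin (θ' - θ) := sin_nonneg_of_nonneg_of_le_pi (by linarith) (by linarith)
  have hsub : sin θ' ≤ sin θ + sin (θ' - θ) := by
    simpa using sin_add_le_sin_add_sin hsin.le hδ
  -- cross-multiplied, the claim is `s * (sin θ' - sin θ) ≤ x * sin (θ' - θ)`
  rw [div_le_div_iff₀ hsin hsin']
  nlinarith [sin_sub θ' θ]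

lemma tripletProb_eq {σ : ℝ} (hσ : 0 < σ) (d θ : ℝ) :
    tripletProb d σ θ = Qfun (√d / σ) + ∫ ξ in Ici √d,
      gaussianPDFReal 0 (nnsq σ) ξ * cdf (gaussianReal 0 (nnsq σ)) ((√d - ξ * cos θ) / sin θ) := by
  simp only [tripletProb, gaussPdf_eq_gaussianPDFReal hσ.le,
    setIntegral_gaussianPDFReal 0 (nnsq_ne_zero hσ.ne'), cdf_eq_real]

theorem tripletProb_mono_and_value_general (d σ : ℝ) (hσ : 0 < σ) :
    (∀ θ θ' : ℝ, 0 < θ → θ ≤ θ' → θ' ≤ Real.pi / 2 →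
        tripletProb d σ θ ≤ tripletProb d σ θ') ∧
    tripletProb d σ (Real.pi / 2) =
      2 * Qfun (Real.sqrt d / σ) - Qfun (Real.sqrt d / σ) ^ 2 := by
  refine ⟨fun θ θ' hθ hθθ' hθ' => ?_, ?_⟩
  · simp only [tripletProb_eq hσ]
    gcongr 1
    exact setIntegral_mul_cdf_mono measurableSet_Ici (integrable_gaussianPDFReal _ _)
      (by fun_prop) (by fun_prop) (fun ξ _ => gaussianPDFReal_nonneg _ _ _)
      (fun ξ hξ => sub_mul_cos_div_sin_le (sqrt_nonneg d) hξ hθ hθθ' (by linarith [pi_pos])) _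
  · rw [tripletProb_eq hσ, cos_pi_div_two, sin_pi_div_two]
    simp only [mul_zero, sub_zero, div_one]
    rw [integral_mul_const, setIntegral_gaussianPDFReal 0 (nnsq_ne_zero hσ.ne'),
      gaussianReal_real_Ici hσ, cdf_eq_real, gaussianReal_real_Iic hσ]
    ring

theorem tripletProb_mono_and_value (d σ : ℝ) (hd : 0 < d) (hσ : 0 < σ) :
    (∀ θ θ' : ℝ, 0 < θ → θ ≤ θ' → θ' ≤ Real.pi / 2 →
        tripletProb d σ θ ≤ tripletProb d σ θ') ∧
    tripletProb d σ (Real.pi / 2) =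
      2 * Qfun (Real.sqrt d / σ) - Qfun (Real.sqrt d / σ) ^ 2 :=
  tripletProb_mono_and_value_general d σ hσ
end

section
/- Under the setting of the pairwise error event: with s the all-ones vector, y = s + z with z i.i.d. N(0,σ²), c⁽¹⁾ differing from s in exactly the first d coordinates, ŷ the componentwise sign hard decision (ŷ_t = 0 if y_t > 0, else 1), and W_H(ŷ) the number of non-positive coordinates of y: P({‖y − c⁽¹⁾‖ ≤ ‖y − s‖} ∩ {W_H(ŷ) ≤ d*}) ≤ Q(√d/σ) · B(p_b, n−d, 0, d*−1), where p_b = Q(1/σ). -/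
open MeasureTheory ProbabilityTheory

noncomputable def binomSum (p : ℝ) (N a b : ℕ) : ℝ :=
  ∑ m ∈ Finset.Icc a b, (N.choose m : ℝ) * p ^ m * (1 - p) ^ (N - m)

/-!
The coordinates of `c` differ from those of `s = 1` by `2` exactly on the block `D` of the first
`d` indices, so `‖y - c‖ ≤ ‖y - s‖` amounts to `∑_{t ∈ D} z_t ≤ -d`. This forces `z_t ≤ -1`,
i.e. `y_t ≤ 0`, for some `t ∈ D`, leaving at most `d* - 1` non-positive `y_t` outside `D`. The two
conditions concern disjoint blocks of the i.i.d. noise, so the probability factors: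
`∑_{t ∈ D} z_t ∼ N(0, dσ²)` gives `Q(√d/σ)`, and the number of `t ∉ D` with `z_t ≤ -1`, each of
probability `Q(1/σ)`, is binomial.
-/

open Finset
open scoped NNReal

lemma map_sum_pi_gaussianReal {ι : Type*} [Fintype ι] (m : ι → ℝ) (v : ι → ℝ≥0) :
    (Measure.pi fun i => gaussianReal (m i) (v i)).map (fun w => ∑ i, w i) =
      gaussianReal (∑ i, m i) (∑ i, v i) := by
  refine Measure.ext_of_charFun (funext fun t => ?_)
  rw [charFun_map_sum_pi_eq_prod, Finset.prod_apply]
  simp_rw [charFun_gaussianReal, ← Complex.exp_sum]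
  push_cast
  simp only [sum_sub_distrib, mul_sum, sum_mul, sum_div]

lemma measureReal_gaussianReal_Ici (x : ℝ) : (gaussianReal 0 1).real (Set.Ici x) = Qfun x := by
  rw [measureReal_def, gaussianReal_apply_eq_integral 0 one_ne_zero, ENNReal.toReal_ofReal
    (setIntegral_nonneg measurableSet_Ici fun _ _ => gaussianPDFReal_nonneg _ _ _), Qfun]
  simp [gaussianPDFReal]

lemma measureReal_gaussianReal_Iic_neg {v : ℝ≥0} (hv : v ≠ 0) (a : ℝ) :
    (gaussianReal 0 v).real (Set.Iic (-a)) = Qfun (a / Real.sqrt v) := by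
  have hsv : 0 < Real.sqrt v := Real.sqrt_pos.2 (by positivity)
  have hstd : (gaussianReal 0 1).map ((-Real.sqrt v) * ·) = gaussianReal 0 v := by
    rw [gaussianReal_map_const_mul]
    congr 1 <;> simp
  rw [← hstd, map_measureReal_apply (by fun_prop) measurableSet_Iic,
    ← measureReal_gaussianReal_Ici]
  congr 1
  ext x
  simp [div_le_iff₀ hsv, mul_comm]

lemma measureReal_pi_gaussianReal_sum_le {ι : Type*} [Fintype ι] [Nonempty ι] {v : ℝ≥0}
    (hv : v ≠ 0) (a : ℝ) :
    (Measure.pi fun _ : ι => gaussianReal 0 v).real {w | ∑ i, w i ≤ -a} =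
      Qfun (a / Real.sqrt (Fintype.card ι * v)) := by
  have hsum := map_sum_pi_gaussianReal (fun _ : ι => 0) (fun _ => v)
  simp only [sum_const_zero, sum_const, card_univ, nsmul_eq_mul] at hsum
  have hcard : (Fintype.card ι : ℝ) * v = ((Fintype.card ι * v : ℝ≥0) : ℝ) := by push_cast; rfl
  rw [hcard, ← measureReal_gaussianReal_Iic_neg (by positivity), ← hsum,
    map_measureReal_apply (by fun_prop) measurableSet_Iic]
  rfl

section Binomial

variable {ι α : Type*} [Fintype ι] {S : Set α} [∀ a, Decidable (a ∈ S)]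

lemma setOf_card_filter_mem_eq (m : ℕ) :
    {w : ι → α | #(univ.filter fun i => w i ∈ S) = m} =
      ⋃ T ∈ powersetCard m univ, (fun w : ι → α => univ.filter fun i => w i ∈ S) ⁻¹' {T} := by
  ext w; simp

variable [DecidableEq ι]

lemma preimage_filter_mem_singleton (T : Finset ι) :
    (fun w : ι → α => univ.filter fun i => w i ∈ S) ⁻¹' {T} =
      Set.univ.pi fun i => if i ∈ T then S else Sᶜ := by
  ext w
  simp only [Set.mem_preimage, Set.mem_singleton_iff, Finset.ext_iff, mem_filter, mem_univ,
    true_and, Set.mem_pi, Set.mem_univ, forall_const]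
  refine forall_congr' fun i => ?_
  split_ifs with hi <;> simp [hi]

variable [MeasurableSpace α] {μ : Measure α} [IsProbabilityMeasure μ]

lemma measurableSet_preimage_filter_mem_singleton (hS : MeasurableSet S) (T : Finset ι) :
    MeasurableSet ((fun w : ι → α => univ.filter fun i => w i ∈ S) ⁻¹' {T}) := by
  rw [preimage_filter_mem_singleton]
  exact MeasurableSet.univ_pi fun i => by split_ifs <;> simp [hS]

lemma measurableSet_card_filter_mem_eq (hS : MeasurableSet S) (m : ℕ) :
    MeasurableSet {w : ι → α | #(univ.filter fun i => w i ∈ S) = m} := by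
  rw [setOf_card_filter_mem_eq]
  exact measurableSet_biUnion _ fun T _ => measurableSet_preimage_filter_mem_singleton hS T

lemma measureReal_pi_preimage_filter_mem_singleton (hS : MeasurableSet S) (T : Finset ι) :
    (Measure.pi fun _ : ι => μ).real ((fun w : ι → α => univ.filter fun i => w i ∈ S) ⁻¹' {T}) =
      μ.real S ^ #T * (1 - μ.real S) ^ (Fintype.card ι - #T) := by
  rw [preimage_filter_mem_singleton, measureReal_def, Measure.pi_pi, ENNReal.toReal_prod,
    ← prod_mul_prod_compl T, ← card_compl]
  simp only [apply_ite, ← measureReal_def, probReal_compl_eq_one_sub hS]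
  rw [prod_congr rfl fun i hi => if_pos hi, prod_congr rfl fun i hi => if_neg (mem_compl.1 hi),
    prod_const, prod_const]

lemma measureReal_pi_card_filter_mem_eq (hS : MeasurableSet S) (m : ℕ) :
    (Measure.pi fun _ : ι => μ).real {w | #(univ.filter fun i => w i ∈ S) = m} =
      (Fintype.card ι).choose m * μ.real S ^ m * (1 - μ.real S) ^ (Fintype.card ι - m) := by
  rw [setOf_card_filter_mem_eq, measureReal_biUnion_finset
    ((Set.pairwiseDisjoint_fiber _ _).subset (Set.subset_univ _))
    fun T _ => measurableSet_preimage_filter_mem_singleton hS T]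
  rw [sum_congr rfl fun T hT => by
    rw [measureReal_pi_preimage_filter_mem_singleton hS, (mem_powersetCard.1 hT).2]]
  simp [mul_assoc]

lemma measureReal_pi_card_filter_mem_le (hS : MeasurableSet S) (k : ℕ) :
    (Measure.pi fun _ : ι => μ).real {w | #(univ.filter fun i => w i ∈ S) ≤ k} =
      binomSum (μ.real S) (Fintype.card ι) 0 k := by
  have hfib : {w : ι → α | #(univ.filter fun i => w i ∈ S) ≤ k} =
      (fun w : ι → α => #(univ.filter fun i => w i ∈ S)) ⁻¹' ↑(Icc 0 k) := by
    ext w; simp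
  rw [hfib, ← sum_measureReal_preimage_singleton _
    fun m _ => measurableSet_card_filter_mem_eq hS m, binomSum]
  exact sum_congr rfl fun m _ => measureReal_pi_card_filter_mem_eq hS m

end Binomial

lemma sum_subtype_le_neg_card_of_sum_sq_le {ι : Type*} [Fintype ι] (P : ι → Prop)
    [DecidablePred P] (z : ι → ℝ) (h : ∑ t, (z t + if P t then 2 else 0) ^ 2 ≤ ∑ t, z t ^ 2) :
    ∑ i : {t // P t}, z i ≤ -Fintype.card {t // P t} := by
  have hpoint : ∀ t, (z t + if P t then 2 else 0) ^ 2 =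
      z t ^ 2 + if P t then 4 * (z t + 1) else 0 := by
    intro t; split_ifs <;> ring
  simp only [hpoint, sum_add_distrib, ← sum_filter, ← mul_sum, sum_const, nsmul_one] at h
  rw [Fintype.card_subtype, ← sum_subtype (univ.filter P) (by simp)]
  linarith

lemma card_filter_subtype_not_lt {ι : Type*} [Fintype ι] (P Q : ι → Prop) [DecidablePred P]
    [DecidablePred Q] (h : ∃ t, P t ∧ Q t) :
    #(univ.filter fun i : {t // ¬P t} => Q i) < #(univ.filter Q) := by
  obtain ⟨t, hP, hQ⟩ := h
  rw [← card_map (Function.Embedding.subtype _)]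
  refine card_lt_card ((ssubset_iff_of_subset ?_).2 ⟨t, by simpa using hQ, by simp [hP]⟩)
  intro x
  simp +contextual

lemma pairwise_error_event_subset {n d dstar : ℕ} (hd : 0 < d) (hdn : d ≤ n)
    {s c : Fin n → ℝ} (hs : ∀ t, s t = 1)
    (hc : ∀ t : Fin n, c t = if (t : ℕ) < d then -1 else 1) :
    {z : Fin n → ℝ | Real.sqrt (∑ t, (s t + z t - c t) ^ 2) ≤
          Real.sqrt (∑ t, (s t + z t - s t) ^ 2) ∧
        #(univ.filter fun t => s t + z t ≤ 0) ≤ dstar} ⊆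
      MeasurableEquiv.piEquivPiSubtypeProd (fun _ => ℝ) (fun t : Fin n => (t : ℕ) < d) ⁻¹'
        ({w | ∑ i, w i ≤ -(d : ℝ)} ×ˢ
          {w | #(univ.filter fun i => w i ∈ Set.Iic (-1)) ≤ dstar - 1}) := by
  rintro z ⟨hdist, hcount⟩
  let P : Fin n → Prop := fun t => (t : ℕ) < d
  have hcardP : Fintype.card {t // P t} = d := Fintype.card_fin_lt_of_le hdn
  have hsum : ∑ i : {t // P t}, z i ≤ -d := by
    have hX : ∀ t, s t + z t - c t = z t + if P t then 2 else 0 := by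
      intro t; rw [hs, hc]; split_ifs <;> ring
    simp only [hX, add_sub_cancel_left] at hdist
    have := sum_subtype_le_neg_card_of_sum_sq_le P z
      ((Real.sqrt_le_sqrt_iff (by positivity)).1 hdist)
    rwa [hcardP] at this
  have : Nonempty {t // P t} := ⟨⟨⟨0, hd.trans_le hdn⟩, hd⟩⟩
  obtain ⟨t, -, ht⟩ := exists_le_of_sum_le (f := fun i : {t // P t} => z i)
    (g := fun _ => (-1 : ℝ)) univ_nonempty (by simpa [hcardP] using hsum)
  have hweight : #(univ.filter fun t => z t ≤ -1) ≤ dstar := by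
    have hflip : ∀ t, s t + z t ≤ 0 ↔ z t ≤ -1 := fun t => by
      rw [hs]; constructor <;> intro h <;> linarith
    simpa only [hflip] using hcount
  have hlt := card_filter_subtype_not_lt P (fun t => z t ≤ -1) ⟨t, t.2, ht⟩
  refine ⟨hsum, ?_⟩
  show #(univ.filter fun i : {t // ¬P t} => z i ≤ -1) ≤ dstar - 1
  omega

open scoped Classical in
theorem pairwise_error_with_region (n d dstar : ℕ) (hd : 0 < d) (hdn : d ≤ n)
    (σ : ℝ) (hσ : 0 < σ)
    (s c : Fin n → ℝ) (hs : ∀ t, s t = 1)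
    (hc : ∀ t : Fin n, c t = if (t : ℕ) < d then -1 else 1) :
    (Measure.pi fun _ : Fin n => gaussianReal 0 (Real.toNNReal (σ ^ 2)))
      {z : Fin n → ℝ |
        Real.sqrt (∑ t, (s t + z t - c t) ^ 2) ≤
          Real.sqrt (∑ t, (s t + z t - s t) ^ 2) ∧
        (Finset.univ.filter fun t => s t + z t ≤ 0).card ≤ dstar}
      ≤ ENNReal.ofReal
          (Qfun (Real.sqrt d / σ) *
            binomSum (Qfun (1 / σ)) (n - d) 0 (dstar - 1)) := by
  set v := Real.toNNReal (σ ^ 2)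
  have hv : v ≠ 0 := by simpa [v] using hσ.ne'
  have hσv : Real.sqrt v = σ := by rw [Real.coe_toNNReal _ (sq_nonneg σ), Real.sqrt_sq hσ.le]
  let P : Fin n → Prop := fun t => (t : ℕ) < d
  have hcardP : Fintype.card {t // P t} = d := Fintype.card_fin_lt_of_le hdn
  have hcardQ : Fintype.card {t // ¬P t} = n - d := by
    rw [Fintype.card_subtype_compl, hcardP, Fintype.card_fin]
  have : Nonempty {t // P t} := ⟨⟨⟨0, hd.trans_le hdn⟩, hd⟩⟩
  have hA : (Measure.pi fun _ : {t // P t} => gaussianReal 0 v).real {w | ∑ i, w i ≤ -d} =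
      Qfun (Real.sqrt d / σ) := by
    rw [measureReal_pi_gaussianReal_sum_le hv, hcardP, Real.sqrt_mul (Nat.cast_nonneg d), hσv,
      ← div_div, Real.div_sqrt]
  have hB : (Measure.pi fun _ : {t // ¬P t} => gaussianReal 0 v).real
      {w | #(univ.filter fun i => w i ∈ Set.Iic (-1)) ≤ dstar - 1} =
      binomSum (Qfun (1 / σ)) (n - d) 0 (dstar - 1) := by
    rw [← hσv, ← measureReal_gaussianReal_Iic_neg hv, ← hcardQ]
    exact measureReal_pi_card_filter_mem_le measurableSet_Iic _
  refine (measure_mono (pairwise_error_event_subset hd hdn hs hc)).trans_eq ?_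
  rw [(measurePreserving_piEquivPiSubtypeProd _ P).measure_preimage_equiv, Measure.prod_prod,
    ← hA, ← hB, ENNReal.ofReal_mul measureReal_nonneg, ofReal_measureReal, ofReal_measureReal]
end
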